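/- Let X be a nontrivial finite group with k := k(X) conjugacy classes, let H ≤ Sym({1,…,n}) be a nontrivial permutation group, and let G = X ≀ H. If α(H)·n ≤ n − log_k(2kn|H|²), where α(H) := max_{1≠h∈H} σ(h)/n, then k(G) < (1 + 1/(kn)) · k^n/|H|. -/

import Mathlib

open Equiv MulAction

/-- The number of conjugacy classes of a group. -/
noncomputable def kclass (G : Type*) [Group G] : ℕ := Nat.card (ConjClasses G)

/-- The coordinate-permuting action of `Perm ι` on `ι → X`, as automorphisms. -/
def permAut (ι X : Type*) [Group X] : Perm ι →* MulAut (ι → X) where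
  toFun e :=
    { toFun := fun f => f ∘ e.symm
      invFun := fun f => f ∘ e
      left_inv := fun f => by funext i; simp
      right_inv := fun f => by funext i; simp
      map_mul' := fun f g => rfl }
  map_one' := by ext f; rfl
  map_mul' := fun e₁ e₂ => by ext f; rfl

/-- The wreath product `X ≀ H` of a group `X` with a permutation group `H ≤ Perm ι`,
i.e. the semidirect product `X^ι ⋊ H` where `H` permutes the direct factors of `X^ι`. -/
abbrev Wreath (X : Type*) [Group X] {ι : Type*} (H : Subgroup (Perm ι)) :=
  SemidirectProduct (ι → X) H ((permAut ι X).comp H.subtype)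

/-- A group acting on `Ω` acts on the functions `Ω → S` by permuting coordinates. -/
instance funMulAction (G Ω S : Type*) [Group G] [MulAction G Ω] : MulAction G (Ω → S) where
  smul g f := fun ω => f (g⁻¹ • ω)
  one_smul f := funext fun ω => by
    show f ((1 : G)⁻¹ • ω) = f ω
    rw [inv_one, one_smul]
  mul_smul g h f := funext fun ω => by
    show f ((g * h)⁻¹ • ω) = f (h⁻¹ • g⁻¹ • ω)
    rw [mul_inv_rev, mul_smul]

/-- `σ(h)`: the number of cycles of a permutation `h` in its disjoint cycle decomposition,
with fixed points counted as cycles of length 1; equivalently, the number of orbits of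
the cyclic group generated by `h`. -/
noncomputable def cycleCount {ι : Type*} (h : Perm ι) : ℕ :=
  Nat.card (orbitRel.Quotient (Subgroup.zpowers h) ι)

/-- `n(G, α)`: the number of orbits of a group action. -/
noncomputable def orbitCount (G : Type*) [Group G] (α : Type*) [MulAction G α] : ℕ :=
  Nat.card (orbitRel.Quotient G α)

/-!
Count the conjugacy classes of `G = X ≀ H` coset by coset of the base group `X^n`. Two elements
of `X^n` are conjugate in `G` as soon as their tuples of `X`-classes lie in the same `H`-orbit, so
by Burnside's lemma the classes inside `X^n` number at most `(1/|H|) ∑_h k^σ(h)`. Conjugating by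
`X^n`, an element `(m, h)` can be brought to a normal form in which `m` is trivial off one base
point per cycle of `h`, and the `X`-classes of the entries at those base points determine its
class; so the coset of `h ≠ 1` meets at most `k^σ(h)` classes. The hypothesis on `α(H)` bounds
each such `k^σ(h)` by `k^n / (2kn|H|²)`, which makes the total smaller than
`(1 + 1/(kn)) k^n / |H|`.
-/

namespace Equiv.Perm

variable {ι : Type*}

theorem orbitRel_zpowers_iff_sameCycle (h : Perm ι) (i j : ι) :
    orbitRel (Subgroup.zpowers h) ι i j ↔ h.SameCycle j i := by
  rw [orbitRel_apply, mem_orbit_iff]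
  constructor
  · rintro ⟨⟨g, hg⟩, rfl⟩
    obtain ⟨z, rfl⟩ := Subgroup.mem_zpowers_iff.mp hg
    exact ⟨z, rfl⟩
  · rintro ⟨z, rfl⟩
    exact ⟨⟨h ^ z, Subgroup.zpow_mem_zpowers h z⟩, rfl⟩

noncomputable def cycleBase (h : Perm ι) (i : ι) : ι :=
  (Quotient.mk'' i : orbitRel.Quotient (Subgroup.zpowers h) ι).out

theorem sameCycle_cycleBase (h : Perm ι) (i : ι) : h.SameCycle (cycleBase h i) i :=
  ((orbitRel_zpowers_iff_sameCycle h _ _).mp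
    (Quotient.mk_out (s := orbitRel (Subgroup.zpowers h) ι) i)).symm

theorem SameCycle.cycleBase_eq {h : Perm ι} {i j : ι} (hij : h.SameCycle i j) :
    cycleBase h i = cycleBase h j := by
  unfold cycleBase
  rw [Quotient.eq''.mpr ((orbitRel_zpowers_iff_sameCycle h i j).mpr hij.symm)]

theorem cycleBase_inv_apply (h : Perm ι) (i : ι) : cycleBase h (h⁻¹ i) = cycleBase h i :=
  SameCycle.cycleBase_eq ⟨1, by simp⟩

variable [Finite ι]

theorem exists_pow_cycleBase_eq (h : Perm ι) (i : ι) :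
    ∃ j : ℕ, (h ^ j) (cycleBase h i) = i := by
  obtain ⟨j, -, hj⟩ := (sameCycle_cycleBase h i).exists_pow_eq'
  exact ⟨j, hj⟩

open scoped Classical in
noncomputable def cycleIndex (h : Perm ι) (i : ι) : ℕ :=
  Nat.find (exists_pow_cycleBase_eq h i)

theorem pow_cycleIndex_cycleBase (h : Perm ι) (i : ι) :
    (h ^ cycleIndex h i) (cycleBase h i) = i := by
  classical
  exact Nat.find_spec (exists_pow_cycleBase_eq h i)

theorem cycleIndex_inv_apply {h : Perm ι} {i : ι} {j : ℕ} (hj : cycleIndex h i = j + 1) :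
    cycleIndex h (h⁻¹ i) = j := by
  classical
  have hspec := pow_cycleIndex_cycleBase h i
  rw [hj, pow_succ', mul_apply] at hspec
  rw [cycleIndex, Nat.find_eq_iff, cycleBase_inv_apply, eq_inv_iff_eq]
  refine ⟨hspec, fun k hk hks => ?_⟩
  refine Nat.find_min (exists_pow_cycleBase_eq h i) (show k + 1 < cycleIndex h i by omega) ?_
  simp [pow_succ', hks]

theorem cycleBase_eq_of_cycleIndex_eq_zero {h : Perm ι} {i : ι} (hi : cycleIndex h i = 0) :
    cycleBase h i = i := by
  simpa [hi] using pow_cycleIndex_cycleBase h i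

end Equiv.Perm

theorem cycleCount_one (ι : Type*) : cycleCount (1 : Perm ι) = Nat.card ι := by
  refine (Nat.card_congr (Equiv.ofBijective Quotient.mk'' ⟨fun i j hij => ?_,
    Quotient.mk''_surjective⟩)).symm
  exact Perm.sameCycle_one.mp ((Perm.orbitRel_zpowers_iff_sameCycle 1 i j).mp
    (Quotient.eq''.mp hij)) |>.symm

section FixedPoints

variable {G Ω S : Type*} [Group G] [MulAction G Ω]

theorem apply_eq_of_mem_fixedBy_of_orbitRel {g : G} {f : Ω → S} (hf : f ∈ fixedBy (Ω → S) g)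
    {ω ω' : Ω} (hω : orbitRel (Subgroup.zpowers g) Ω ω ω') : f ω = f ω' := by
  obtain ⟨⟨x, hx⟩, rfl⟩ := hω
  have hxf : x • f = f := Subgroup.zpowers_le.mpr (mem_stabilizer_iff.mpr hf) hx
  calc f (x • ω') = (x • f) (x • ω') := by rw [hxf]
    _ = f ω' := congrArg f (inv_smul_smul x ω')

noncomputable def fixedByFunEquiv (g : G) :
    fixedBy (Ω → S) g ≃ (orbitRel.Quotient (Subgroup.zpowers g) Ω → S) where
  toFun f c := f.1 c.out
  invFun u := ⟨fun ω => u (Quotient.mk'' ω), funext fun _ => congrArg u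
    (Quotient.sound ⟨⟨g⁻¹, Subgroup.inv_mem _ (Subgroup.mem_zpowers g)⟩, rfl⟩)⟩
  left_inv f := Subtype.ext (funext fun ω =>
    apply_eq_of_mem_fixedBy_of_orbitRel f.2 (Quotient.mk_out (s := orbitRel _ Ω) ω))
  right_inv u := funext fun c => congrArg u (Quotient.out_eq c)

theorem card_fixedBy_fun (g : G) [Finite (orbitRel.Quotient (Subgroup.zpowers g) Ω)] :
    Nat.card (fixedBy (Ω → S) g) =
      Nat.card S ^ Nat.card (orbitRel.Quotient (Subgroup.zpowers g) Ω) := by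
  rw [Nat.card_congr (fixedByFunEquiv g), Nat.card_fun]

end FixedPoints

theorem orbitCount_mul_card {ι C : Type*} [Finite ι] [Finite C] (H : Subgroup (Perm ι))
    [Fintype H] :
    orbitCount H (ι → C) * Nat.card H = ∑ h : H, Nat.card C ^ cycleCount (h : Perm ι) := by
  have := Fintype.ofFinite (orbitRel.Quotient H (ι → C))
  have := fun h : H => Fintype.ofFinite (fixedBy (ι → C) h)
  rw [orbitCount, Nat.card_eq_fintype_card, Nat.card_eq_fintype_card,
    ← sum_card_fixedBy_eq_card_orbits_mul_card_group]
  refine Finset.sum_congr rfl fun h _ => ?_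
  rw [← Nat.card_eq_fintype_card]
  exact card_fixedBy_fun (h : Perm ι)

section NormalForm

variable {ι X : Type*} [Group X]

def twistConj (v m : ι → X) (h : Perm ι) (i : ι) : X :=
  v i * m i * (v (h⁻¹ i))⁻¹

def cyclePartialProd (m : ι → X) (h : Perm ι) (b : ι) : ℕ → X
  | 0 => 1
  | j + 1 => m ((h ^ (j + 1)) b) * cyclePartialProd m h b j

theorem exists_twistConj_eq {m m' : ι → X} {h : Perm ι}
    (hm : ∀ i, h.cycleBase i ≠ i → m i = 1) (hm' : ∀ i, h.cycleBase i ≠ i → m' i = 1)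
    (hc : ∀ i, IsConj (m i) (m' i)) :
    ∃ v : ι → X, twistConj v m h = m' := by
  choose u hu using fun i => isConj_iff.mp (hc i)
  refine ⟨fun i => u (h.cycleBase i), funext fun i => ?_⟩
  simp only [twistConj, Perm.cycleBase_inv_apply]
  by_cases hi : h.cycleBase i = i
  · rw [hi, hu]
  · rw [hm i hi, hm' i hi]
    group

variable [Finite ι]

/-- Twisting by this normalizer pushes the product of `m` along each cycle of `h` onto the
base point of the cycle. -/
noncomputable def cycleNormalizer (m : ι → X) (h : Perm ι) (i : ι) : X :=
  (cyclePartialProd m h (h.cycleBase i) (h.cycleIndex i))⁻¹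

noncomputable def normalForm (m : ι → X) (h : Perm ι) : ι → X :=
  twistConj (cycleNormalizer m h) m h

theorem normalForm_eq_one {m : ι → X} {h : Perm ι} {i : ι} (hi : h.cycleBase i ≠ i) :
    normalForm m h i = 1 := by
  obtain ⟨j, hj⟩ : ∃ j, h.cycleIndex i = j + 1 :=
    Nat.exists_eq_succ_of_ne_zero fun h0 => hi (Perm.cycleBase_eq_of_cycleIndex_eq_zero h0)
  have hmi : m i = m ((h ^ (j + 1)) (h.cycleBase i)) := by
    rw [← hj, Perm.pow_cycleIndex_cycleBase]
  rw [normalForm, twistConj, cycleNormalizer, cycleNormalizer, hj, Perm.cycleIndex_inv_apply hj,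
    Perm.cycleBase_inv_apply, hmi, cyclePartialProd]
  group

end NormalForm

namespace Wreath

variable {X ι : Type*} [Group X] {H : Subgroup (Perm ι)}

open SemidirectProduct

theorem inl_mul_mk_mul_inl_inv (v m : ι → X) (h : H) :
    (inl v : Wreath X H) * ⟨m, h⟩ * (inl v)⁻¹ = ⟨twistConj v m h, h⟩ :=
  SemidirectProduct.ext (funext fun _ => rfl) (by simp)

theorem inr_mul_mk_one_mul_inr_inv (σ : H) (m : ι → X) :
    (inr σ : Wreath X H) * ⟨m, 1⟩ * (inr σ)⁻¹ = ⟨σ • m, 1⟩ :=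
  SemidirectProduct.ext (funext fun _ => by simp; rfl) (by simp)

theorem isConj_mk_one_of_isConj_apply {m m' : ι → X} (hc : ∀ i, IsConj (m i) (m' i)) :
    IsConj (⟨m, 1⟩ : Wreath X H) ⟨m', 1⟩ := by
  choose u hu using fun i => isConj_iff.mp (hc i)
  refine isConj_iff.mpr ⟨inl u, ?_⟩
  rw [inl_mul_mk_mul_inl_inv]
  exact SemidirectProduct.ext (funext fun i => by simp [twistConj, hu]) rfl

theorem isConj_mk_one_of_orbitRel {m m' : ι → X}
    (hmm' : orbitRel H (ι → ConjClasses X) (ConjClasses.mk ∘ m) (ConjClasses.mk ∘ m')) :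
    IsConj (⟨m, 1⟩ : Wreath X H) ⟨m', 1⟩ := by
  obtain ⟨σ, hσ⟩ := hmm'
  have hperm : IsConj (⟨m', 1⟩ : Wreath X H) ⟨σ • m', 1⟩ :=
    isConj_iff.mpr ⟨inr σ, inr_mul_mk_one_mul_inr_inv σ m'⟩
  refine (hperm.trans (isConj_mk_one_of_isConj_apply fun i => ?_)).symm
  exact ConjClasses.mk_eq_mk_iff_isConj.mp (congrFun hσ i)

variable [Finite ι]

theorem isConj_mk_normalForm (m : ι → X) (h : H) :
    IsConj (⟨m, h⟩ : Wreath X H) ⟨normalForm m h, h⟩ :=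
  isConj_iff.mpr ⟨inl (cycleNormalizer m h), inl_mul_mk_mul_inl_inv _ _ _⟩

theorem isConj_mk_of_isConj_normalForm {m m' : ι → X} {h : H}
    (hc : ∀ c : orbitRel.Quotient (Subgroup.zpowers (h : Perm ι)) ι,
      IsConj (normalForm m h c.out) (normalForm m' h c.out)) :
    IsConj (⟨m, h⟩ : Wreath X H) ⟨m', h⟩ := by
  have hbase : ∀ i, IsConj (normalForm m h i) (normalForm m' h i) := by
    intro i
    by_cases hi : (h : Perm ι).cycleBase i = i
    · rw [← hi]
      exact hc _
    · rw [normalForm_eq_one hi, normalForm_eq_one hi]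
  obtain ⟨v, hv⟩ :=
    exists_twistConj_eq (fun _ => normalForm_eq_one) (fun _ => normalForm_eq_one) hbase
  refine ((isConj_mk_normalForm m h).trans ?_).trans (isConj_mk_normalForm m' h).symm
  exact isConj_iff.mpr ⟨inl v, by rw [inl_mul_mk_mul_inl_inv, hv]⟩

open scoped Classical in
noncomputable def conjInvariant (g : Wreath X H) :
    orbitRel.Quotient H (ι → ConjClasses X) ⊕
      Σ h : {h : H // h ≠ 1},
        (orbitRel.Quotient (Subgroup.zpowers ((h : H) : Perm ι)) ι → ConjClasses X) :=
  if hg : g.right = 1 then .inl (Quotient.mk'' (ConjClasses.mk ∘ g.left))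
  else .inr ⟨⟨g.right, hg⟩, fun c => ConjClasses.mk (normalForm g.left g.right c.out)⟩

theorem isConj_of_conjInvariant_eq {g g' : Wreath X H} (e : conjInvariant g = conjInvariant g') :
    IsConj g g' := by
  obtain ⟨m, h⟩ := g
  obtain ⟨m', h'⟩ := g'
  unfold conjInvariant at e
  by_cases hh : h = 1 <;> by_cases hh' : h' = 1
  · subst hh hh'
    simp only [dif_pos, Sum.inl.injEq] at e
    exact isConj_mk_one_of_orbitRel (Quotient.eq''.mp e)
  · simp [hh, hh'] at e
  · simp [hh, hh'] at e
  · simp only [dif_neg hh, dif_neg hh', Sum.inr.injEq, Sigma.mk.inj_iff, Subtype.mk.injEq] at e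
    obtain ⟨rfl, e⟩ := e
    exact isConj_mk_of_isConj_normalForm fun c =>
      ConjClasses.mk_eq_mk_iff_isConj.mp (congrFun (eq_of_heq e) c)

theorem kclass_le [Finite X] [Fintype H] [DecidableEq H] :
    kclass (Wreath X H) ≤ orbitCount H (ι → ConjClasses X) +
      ∑ h ∈ Finset.univ.erase (1 : H), kclass X ^ cycleCount (h : Perm ι) := by
  have hinj : Function.Injective fun c : ConjClasses (Wreath X H) =>
      conjInvariant (Quotient.out c) := by
    intro c c' e
    rw [← Quotient.out_eq c, ← Quotient.out_eq c']
    exact ConjClasses.mk_eq_mk_iff_isConj.mpr (isConj_of_conjInvariant_eq e)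
  refine (Nat.card_le_card_of_injective _ hinj).trans_eq ?_
  rw [Nat.card_sum, Nat.card_sigma]
  simp only [Nat.card_fun, kclass, orbitCount, cycleCount]
  rw [← Finset.sum_coe_sort (Finset.univ.erase 1)]
  exact congrArg _ (Fintype.sum_equiv (Equiv.subtypeEquivRight fun _ => by simp) _ _ fun _ => rfl)

end Wreath

theorem one_lt_kclass (G : Type*) [Group G] [Finite G] [Nontrivial G] : 1 < kclass G := by
  obtain ⟨x, hx⟩ := exists_ne (1 : G)
  have : Nontrivial (ConjClasses G) := ⟨⟨.mk x, .mk 1, fun e =>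
    hx (isConj_one_right.mp (ConjClasses.mk_eq_mk_iff_isConj.mp e).symm)⟩⟩
  exact Finite.one_lt_card

theorem Real.rpow_le_rpow_div_of_le_sub_logb {b x y D : ℝ} (hb : 1 < b) (hD : 0 < D)
    (h : x ≤ y - Real.logb b D) : b ^ x ≤ b ^ y / D :=
  calc b ^ x ≤ b ^ (y - Real.logb b D) := Real.rpow_le_rpow_of_exponent_le hb.le h
    _ = b ^ y / D := by
      rw [Real.rpow_sub (by positivity), Real.rpow_logb (by positivity) hb.ne' hD]

theorem add_lt_of_mul_eq_add_of_le {A S P K c : ℝ} (hc : 0 < c) (hP : 0 < P) (hK : 1 ≤ K)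
    (hA : A * K = P + S) (hS : S ≤ (K - 1) * (P / (2 * c * K ^ 2))) :
    A + S < (1 + 1 / c) * (P / K) := by
  have hK0 : 0 < K := by linarith
  have hA' : A = (P + S) / K := by rw [← hA, mul_div_cancel_right₀ _ hK0.ne']
  have hS' : S * (2 * c * K ^ 2) ≤ (K - 1) * P := by
    rwa [← le_div_iff₀ (by positivity), mul_div_assoc]
  rw [hA', div_add' _ _ _ hK0.ne', div_lt_iff₀ hK0, one_add_div hc.ne', div_mul_div_comm,
    div_mul_eq_mul_div, lt_div_iff₀ (by positivity)]
  nlinarith [mul_pos hc hP, mul_pos (mul_pos hc hP) hK0]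

theorem statement6_general (n : ℕ) (X : Type) [Group X] [Finite X] [Nontrivial X]
    (H : Subgroup (Perm (Fin n))) (α : ℝ)
    (hα : IsGreatest
      {a : ℝ | ∃ h : H, h ≠ 1 ∧ a = (cycleCount (h : Perm (Fin n)) : ℝ) / n} α)
    (hcond : α * n ≤ n - Real.logb (kclass X)
      (2 * (kclass X : ℝ) * n * (Nat.card H : ℝ) ^ 2)) :
    (kclass (Wreath X H) : ℝ) <
      (1 + 1 / ((kclass X : ℝ) * n)) * ((kclass X : ℝ) ^ n / (Nat.card H : ℝ)) := by
  classical
  obtain ⟨⟨h₀, hh₀, -⟩, hα_max⟩ := hα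
  have hn : 0 < n := Nat.pos_of_ne_zero fun hn => hh₀ (by subst hn; exact Subsingleton.elim _ _)
  have hk : 1 < (kclass X : ℝ) := by exact_mod_cast one_lt_kclass X
  have hH : 1 ≤ (Nat.card H : ℝ) := by exact_mod_cast Nat.card_pos (α := H)
  have hterm : ∀ h ∈ Finset.univ.erase (1 : H),
      ((kclass X ^ cycleCount (h : Perm (Fin n)) : ℕ) : ℝ) ≤
        (kclass X : ℝ) ^ n / (2 * (kclass X : ℝ) * n * (Nat.card H : ℝ) ^ 2) := by
    intro h hh
    have hσ := (div_le_iff₀ (by positivity)).mp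
      (hα_max ⟨h, (Finset.mem_erase.mp hh).1, rfl⟩)
    rw [Nat.cast_pow, ← Real.rpow_natCast, ← Real.rpow_natCast]
    exact Real.rpow_le_rpow_div_of_le_sub_logb hk (by positivity) (hσ.trans hcond)
  have hsum := Finset.sum_le_card_nsmul _ _ _ hterm
  rw [Finset.card_erase_of_mem (Finset.mem_univ _), Finset.card_univ, ← Nat.card_eq_fintype_card,
    nsmul_eq_mul, Nat.cast_sub Nat.card_pos] at hsum
  have hburnside : orbitCount H (Fin n → ConjClasses X) * Nat.card H =
      kclass X ^ n +
        ∑ h ∈ Finset.univ.erase (1 : H), kclass X ^ cycleCount (h : Perm (Fin n)) := by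
    rw [orbitCount_mul_card, ← Finset.add_sum_erase _ _ (Finset.mem_univ 1), OneMemClass.coe_one,
      cycleCount_one, Nat.card_fin, kclass]
  refine (Nat.cast_le.mpr (Wreath.kclass_le (X := X) (H := H))).trans_lt ?_
  push_cast
  exact add_lt_of_mul_eq_add_of_le (by positivity) (by positivity) hH (by exact_mod_cast hburnside)
    (by simpa [mul_assoc] using hsum)

/-- If `α(H) n ≤ n - log_k (2 k n |H|²)`, then `k(X ≀ H) < (1 + 1/(kn)) k^n / |H|`. -/
theorem statement6 (n : ℕ) (X : Type) [Group X] [Finite X] [Nontrivial X]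
    (H : Subgroup (Perm (Fin n))) [Nontrivial H] (α : ℝ)
    (hα : IsGreatest
      {a : ℝ | ∃ h : H, h ≠ 1 ∧ a = (cycleCount (h : Perm (Fin n)) : ℝ) / n} α)
    (hcond : α * n ≤ n - Real.logb (kclass X)
      (2 * (kclass X : ℝ) * n * (Nat.card H : ℝ) ^ 2)) :
    (kclass (Wreath X H) : ℝ) <
      (1 + 1 / ((kclass X : ℝ) * n)) * ((kclass X : ℝ) ^ n / (Nat.card H : ℝ)) :=
  statement6_general n X H α hα hcond
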